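/- If X : ℝ → L⁰(Ω; E) is θ-almost periodic, then X is almost periodic in finite-dimensional distribution: for every finite sequence (t₁, …, t_n) of reals, the map t ↦ Law(X(t₁+t, θ_{−t}·), …, X(t_n+t, θ_{−t}·)) from ℝ to the space of Borel probability measures on Eⁿ (with the Wasserstein-type metric associated to the truncated max metric) is Bohr almost periodic. Moreover, if τ is a θ-ε-almost period of X, then τ is an (nε)-almost period of this law-valued map. -/

import Mathlib

open MeasureTheory Set Filter Topology

noncomputable section

def RelativelyDense (A : Set ℝ) : Prop :=
  ∃ l > 0, ∀ t : ℝ, ∃ a ∈ A, a ∈ Set.Icc t (t + l)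

variable {Ω : Type*} [MeasurableSpace Ω] {E : Type*} [MetricSpace E]

/-- The metric of convergence in probability on random variables. -/
def d0 (P : Measure Ω) (Y Z : Ω → E) : ℝ :=
  ∫ ω, min (dist (Y ω) (Z ω)) 1 ∂P

/-- `τ` is a `θ`-`ε`-almost period of the process `X`. -/
def IsThetaAlmostPeriod (P : Measure Ω) (θ : ℝ → Ω → Ω) (X : ℝ → Ω → E)
    (ε τ : ℝ) : Prop :=
  ∀ t : ℝ, d0 P (fun ω => X (t + τ) (θ (-τ) ω)) (X t) ≤ ε

/-- `θ`-almost periodicity (in probability): joint continuity in probability of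
`(t,s) ↦ X (t+s, θ₋ₛ ·)` and relative density of the set of `θ`-`ε`-almost
periods for every `ε > 0`. -/
def ThetaAlmostPeriodic (P : Measure Ω) (θ : ℝ → Ω → Ω) (X : ℝ → Ω → E) : Prop :=
  (∀ t s : ℝ, ∀ ε > 0, ∃ δ > 0, ∀ t' s' : ℝ, |t' - t| < δ → |s' - s| < δ →
      d0 P (fun ω => X (t' + s') (θ (-s') ω)) (fun ω => X (t + s) (θ (-s) ω)) ≤ ε) ∧
  (∀ ε > 0, RelativelyDense {τ : ℝ | IsThetaAlmostPeriod P θ X ε τ})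

/-- Wasserstein-type distance associated with the truncated metric, defined via
couplings. -/
def Wtrunc {S : Type*} [MetricSpace S] [MeasurableSpace S]
    (μ ν : Measure S) : ℝ :=
  sInf {r : ℝ | ∃ γ : Measure (S × S), IsProbabilityMeasure γ ∧
    γ.map Prod.fst = μ ∧ γ.map Prod.snd = ν ∧
    r = ∫ q, min (dist q.1 q.2) 1 ∂γ}

/-!
The coupling `ω ↦ (Y ω, Z ω)` bounds `Wtrunc (Law Y) (Law Z)` by `E[min (dist Y Z) 1]`, and for
`Eⁿ`-valued vectors the truncated max-distance is at most the sum of the coordinatewise truncated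
distances. So the law distance of the shifted finite-dimensional vectors is at most a sum of `n`
`d0`-distances. Since `θ₋₍ₜ₊τ₎ = θ₋τ ∘ θ₋ₜ` and `θ₋ₜ` preserves `P`, each of them is a
`d0`-distance of the form appearing in the definition of a `θ`-`ε`-almost period, hence at most
`ε`; continuity follows in the same way from the joint continuity in probability.
-/

lemma RelativelyDense.mono {A B : Set ℝ} (hA : RelativelyDense A) (h : A ⊆ B) :
    RelativelyDense B := by
  obtain ⟨l, hl, hA⟩ := hA
  refine ⟨l, hl, fun t => ?_⟩
  obtain ⟨a, ha, hat⟩ := hA t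
  exact ⟨a, h ha, hat⟩

lemma nat_mul_div_succ_le (n : ℕ) {ε : ℝ} (hε : 0 ≤ ε) : n * (ε / (n + 1)) ≤ ε := by
  rw [mul_div_assoc', div_le_iff₀ (by positivity)]
  nlinarith

lemma min_dist_pi_le_sum {ι : Type*} [Fintype ι] {π : ι → Type*}
    [∀ i, PseudoMetricSpace (π i)] (f g : ∀ i, π i) :
    min (dist f g) 1 ≤ ∑ i, min (dist (f i) (g i)) 1 := by
  have hterm : ∀ i, 0 ≤ min (dist (f i) (g i)) 1 := fun i => le_min dist_nonneg zero_le_one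
  set S := ∑ i, min (dist (f i) (g i)) 1
  by_cases hS : 1 ≤ S
  · exact (min_le_right _ _).trans hS
  refine (min_le_left _ _).trans ((dist_pi_le_iff (Finset.sum_nonneg fun i _ => hterm i)).2
    fun i => ?_)
  have hi : min (dist (f i) (g i)) 1 ≤ S :=
    Finset.single_le_sum (fun j _ => hterm j) (Finset.mem_univ i)
  exact (min_le_iff.1 hi).resolve_right hS

section D0

variable {S : Type*} [MetricSpace S] [MeasurableSpace S] [BorelSpace S]
  [SecondCountableTopology S] (P : Measure Ω)

lemma integrable_min_dist_one [IsFiniteMeasure P] {Y Z : Ω → S}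
    (hY : Measurable Y) (hZ : Measurable Z) :
    Integrable (fun ω => min (dist (Y ω) (Z ω)) 1) P := by
  refine Integrable.mono' (integrable_const (1 : ℝ))
    ((hY.dist hZ).min measurable_const).aestronglyMeasurable (ae_of_all _ fun ω => ?_)
  rw [Real.norm_eq_abs, abs_of_nonneg (le_min dist_nonneg zero_le_one)]
  exact min_le_right _ _

lemma Wtrunc_map_le_d0 [IsProbabilityMeasure P] {Y Z : Ω → S}
    (hY : Measurable Y) (hZ : Measurable Z) :
    Wtrunc (P.map Y) (P.map Z) ≤ d0 P Y Z := by
  have hYZ : Measurable (fun ω => (Y ω, Z ω)) := hY.prodMk hZ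
  refine csInf_le ⟨0, ?_⟩ ⟨P.map (fun ω => (Y ω, Z ω)),
    Measure.isProbabilityMeasure_map hYZ.aemeasurable, ?_, ?_, ?_⟩
  · rintro r ⟨γ, -, -, -, rfl⟩
    exact integral_nonneg fun q => le_min dist_nonneg zero_le_one
  · rw [Measure.map_map measurable_fst hYZ]; rfl
  · rw [Measure.map_map measurable_snd hYZ]; rfl
  · rw [integral_map hYZ.aemeasurable
      (continuous_dist.min continuous_const).aestronglyMeasurable]
    rfl

lemma d0_pi_le_sum [IsFiniteMeasure P] {ι : Type*} [Fintype ι] {Y Z : ι → Ω → S}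
    (hY : ∀ i, Measurable (Y i)) (hZ : ∀ i, Measurable (Z i)) :
    d0 P (fun ω i => Y i ω) (fun ω i => Z i ω) ≤ ∑ i, d0 P (Y i) (Z i) := by
  have hint := fun i => integrable_min_dist_one P (hY i) (hZ i)
  simp only [d0]
  rw [← integral_finsetSum _ fun i _ => hint i]
  exact integral_mono_of_nonneg (ae_of_all _ fun ω => le_min dist_nonneg zero_le_one)
    (integrable_finsetSum _ fun i _ => hint i) (ae_of_all _ fun ω => min_dist_pi_le_sum _ _)

lemma d0_comp_measurePreserving {Ω' : Type*} [MeasurableSpace Ω'] {P' : Measure Ω'}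
    {T : Ω' → Ω} (hT : MeasurePreserving T P' P) {Y Z : Ω → S}
    (hY : Measurable Y) (hZ : Measurable Z) :
    d0 P' (Y ∘ T) (Z ∘ T) = d0 P Y Z := by
  rw [d0, d0, ← hT.map_eq, integral_map hT.measurable.aemeasurable
    ((hY.dist hZ).min measurable_const).aestronglyMeasurable]
  rfl

end D0

lemma ThetaAlmostPeriodic.eventually_d0_le {P : Measure Ω} {θ : ℝ → Ω → Ω} {X : ℝ → Ω → E}
    (hX : ThetaAlmostPeriodic P θ X)
    (a t : ℝ) {ε : ℝ} (hε : 0 < ε) :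
    ∀ᶠ t' in 𝓝 t,
      d0 P (fun ω => X (a + t') (θ (-t') ω)) (fun ω => X (a + t) (θ (-t) ω)) ≤ ε := by
  obtain ⟨δ, hδ, hclose⟩ := hX.1 a t ε hε
  exact Metric.eventually_nhds_iff.2 ⟨δ, hδ, fun t' ht' =>
    hclose a t' (by simpa using hδ) (by rwa [← Real.dist_eq])⟩

section FiniteDimensionalLaws

variable [MeasurableSpace E] [BorelSpace E] [SecondCountableTopology E]
  (P : Measure Ω) (θ : ℝ → Ω → Ω) (X : ℝ → Ω → E)
  {n : ℕ} (ts : Fin n → ℝ)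

lemma Wtrunc_map_fdd_le_sum [IsProbabilityMeasure P] (hθm : ∀ s, Measurable (θ s))
    (hXm : ∀ t, Measurable (X t)) (t' t : ℝ) :
    Wtrunc (P.map fun ω i => X (ts i + t') (θ (-t') ω))
        (P.map fun ω i => X (ts i + t) (θ (-t) ω)) ≤
      ∑ i, d0 P (fun ω => X (ts i + t') (θ (-t') ω))
        (fun ω => X (ts i + t) (θ (-t) ω)) := by
  have hm : ∀ s a, Measurable fun ω => X a (θ (-s) ω) := fun s a => (hXm a).comp (hθm _)
  exact (Wtrunc_map_le_d0 P (measurable_pi_lambda _ fun i => hm t' _)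
    (measurable_pi_lambda _ fun i => hm t _)).trans
    (d0_pi_le_sum P (fun i => hm t' _) (fun i => hm t _))

lemma d0_flow_shift (hmp : ∀ s, MeasurePreserving (θ s) P P)
    (hθadd : ∀ s t, θ (s + t) = θ s ∘ θ t) (hXm : ∀ t, Measurable (X t)) (a t τ : ℝ) :
    d0 P (fun ω => X (a + τ) (θ (-(t + τ)) ω)) (fun ω => X a (θ (-t) ω)) =
      d0 P (fun ω => X (a + τ) (θ (-τ) ω)) (X a) := by
  have hflow : θ (-(t + τ)) = θ (-τ) ∘ θ (-t) := by rw [← hθadd]; ring_nf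
  rw [hflow]
  exact d0_comp_measurePreserving P (hmp (-t)) ((hXm _).comp (hmp _).measurable) (hXm a)

lemma Wtrunc_map_fdd_le_of_isThetaAlmostPeriod [IsProbabilityMeasure P]
    (hmp : ∀ s, MeasurePreserving (θ s) P P) (hθadd : ∀ s t, θ (s + t) = θ s ∘ θ t)
    (hXm : ∀ t, Measurable (X t)) {ε τ : ℝ}
    (hτ : IsThetaAlmostPeriod P θ X ε τ) (t : ℝ) :
    Wtrunc (P.map fun ω i => X (ts i + (t + τ)) (θ (-(t + τ)) ω))
        (P.map fun ω i => X (ts i + t) (θ (-t) ω)) ≤ n * ε := by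
  refine (Wtrunc_map_fdd_le_sum P θ X ts (fun s => (hmp s).measurable) hXm _ _).trans ?_
  refine (Finset.sum_le_sum (g := fun _ => ε) fun i _ => ?_).trans_eq (by simp)
  rw [← add_assoc, d0_flow_shift P θ X hmp hθadd hXm]
  exact hτ _

lemma Wtrunc_map_fdd_continuity [IsProbabilityMeasure P] (hθm : ∀ s, Measurable (θ s))
    (hXm : ∀ t, Measurable (X t))
    (hcont : ∀ a t ε, 0 < ε → ∀ᶠ t' in 𝓝 t,
      d0 P (fun ω => X (a + t') (θ (-t') ω)) (fun ω => X (a + t) (θ (-t) ω)) ≤ ε)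
    (t : ℝ) {ε : ℝ} (hε : 0 < ε) :
    ∃ δ > 0, ∀ t' : ℝ, |t' - t| < δ →
      Wtrunc (P.map fun ω i => X (ts i + t') (θ (-t') ω))
        (P.map fun ω i => X (ts i + t) (θ (-t) ω)) ≤ ε := by
  have hεn : 0 < ε / (n + 1) := by positivity
  obtain ⟨δ, hδ, hclose⟩ :=
    Metric.eventually_nhds_iff.1 (eventually_all.2 fun i => hcont (ts i) t _ hεn)
  refine ⟨δ, hδ, fun t' ht' => (Wtrunc_map_fdd_le_sum P θ X ts hθm hXm t' t).trans ?_⟩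
  calc _ ≤ ∑ _i : Fin n, ε / (n + 1) :=
        Finset.sum_le_sum fun i _ => hclose (by rwa [Real.dist_eq]) i
    _ = n * (ε / (n + 1)) := by simp
    _ ≤ ε := nat_mul_div_succ_le n hε.le

end FiniteDimensionalLaws

theorem apfd_of_thetaAlmostPeriodic_general
    [PolishSpace E] [MeasurableSpace E] [BorelSpace E]
    (P : Measure Ω) [IsProbabilityMeasure P] (θ : ℝ → Ω → Ω)
    (hmp : ∀ s : ℝ, MeasurePreserving (θ s) P P)
    (hθadd : ∀ s t : ℝ, θ (s + t) = θ s ∘ θ t)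
    (X : ℝ → Ω → E) (hXm : ∀ t : ℝ, Measurable (X t))
    (hX : ThetaAlmostPeriodic P θ X)
    (n : ℕ) (ts : Fin n → ℝ)
    (μ : ℝ → Measure (Fin n → E))
    (hμ : μ = fun t => P.map (fun ω => fun i => X (ts i + t) (θ (-t) ω))) :
    ((∀ t : ℝ, ∀ ε > 0, ∃ δ > 0, ∀ t' : ℝ, |t' - t| < δ → Wtrunc (μ t') (μ t) ≤ ε) ∧
      ∀ ε > 0, RelativelyDense {τ : ℝ | ∀ t : ℝ, Wtrunc (μ (t + τ)) (μ t) ≤ ε}) ∧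
    (∀ ε > 0, ∀ τ : ℝ, IsThetaAlmostPeriod P θ X ε τ →
      ∀ t : ℝ, Wtrunc (μ (t + τ)) (μ t) ≤ n * ε) := by
  subst hμ
  have hθm : ∀ s, Measurable (θ s) := fun s => (hmp s).measurable
  have hperiod := fun ε τ (hτ : IsThetaAlmostPeriod P θ X ε τ) =>
    Wtrunc_map_fdd_le_of_isThetaAlmostPeriod P θ X ts hmp hθadd hXm hτ
  refine ⟨⟨fun t ε hε => Wtrunc_map_fdd_continuity P θ X ts hθm hXm
      (fun a t _ => hX.eventually_d0_le a t) t hε, fun ε hε => ?_⟩,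
    fun ε _ => hperiod ε⟩
  have hεn : 0 < ε / (n + 1) := by positivity
  exact (hX.2 _ hεn).mono fun τ hτ t =>
    (hperiod _ τ hτ t).trans (nat_mul_div_succ_le n hε.le)

/-- A `θ`-almost periodic process is almost periodic in finite-dimensional
distribution; moreover every `θ`-`ε`-almost period of `X` is an `(n·ε)`-almost
period of the finite-dimensional-law map. -/
theorem apfd_of_thetaAlmostPeriodic
    [PolishSpace E] [MeasurableSpace E] [BorelSpace E]
    (P : Measure Ω) [IsProbabilityMeasure P] (θ : ℝ → Ω → Ω)
    (hmp : ∀ s : ℝ, MeasurePreserving (θ s) P P)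
    (hθ0 : θ 0 = id) (hθadd : ∀ s t : ℝ, θ (s + t) = θ s ∘ θ t)
    (X : ℝ → Ω → E) (hXm : ∀ t : ℝ, Measurable (X t))
    (hθm : ∀ s : ℝ, Measurable (θ s))
    (hX : ThetaAlmostPeriodic P θ X)
    (n : ℕ) (ts : Fin n → ℝ)
    (μ : ℝ → Measure (Fin n → E))
    (hμ : μ = fun t => P.map (fun ω => fun i => X (ts i + t) (θ (-t) ω))) :
    ((∀ t : ℝ, ∀ ε > 0, ∃ δ > 0, ∀ t' : ℝ, |t' - t| < δ → Wtrunc (μ t') (μ t) ≤ ε) ∧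
      ∀ ε > 0, RelativelyDense {τ : ℝ | ∀ t : ℝ, Wtrunc (μ (t + τ)) (μ t) ≤ ε}) ∧
    (∀ ε > 0, ∀ τ : ℝ, IsThetaAlmostPeriod P θ X ε τ →
      ∀ t : ℝ, Wtrunc (μ (t + τ)) (μ t) ≤ n * ε) :=
  apfd_of_thetaAlmostPeriodic_general P θ hmp hθadd X hXm hX n ts μ hμ
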